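/- arXiv:1805.10071 — 3 statements merged into one kernel-verified Lean document; each statement's English description precedes it below -/
import Mathlib

section
/- Almost surely, liminf_{n→∞} M_n > 0; in particular, on the almost sure event where M_n converges, the limit M = lim_{n→∞} M_n satisfies M > 0. -/
open MeasureTheory ProbabilityTheory Filter Set Topology

noncomputable section

/-- `γ_n = γ₀ + 4 n`. -/
def rpsGamma (γ₀ : ℝ) (n : ℕ) : ℝ := γ₀ + 4 * n

/-- The increments to the (unnormalised) degrees of the three types
for each of the six possible transitions. -/
def rpsIncr : Fin 6 → ℝ × ℝ × ℝ
  | 0 => (4, 0, 0)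
  | 1 => (0, 4, 0)
  | 2 => (0, 0, 4)
  | 3 => (1, 3, 0)
  | 4 => (0, 1, 3)
  | 5 => (3, 0, 1)

/-- The conditional probability of each of the six possible transitions,
as a function of the current state `(x, y, z)`. -/
def rpsProb (i : Fin 6) (x y z : ℝ) : ℝ :=
  match i with
  | 0 => x ^ 2
  | 1 => y ^ 2
  | 2 => z ^ 2
  | 3 => 2 * x * y
  | 4 => 2 * y * z
  | 5 => 2 * z * x

/-- The rock–paper–scissors preferential attachment chain: an adapted process
`(X n, Y n, Z n)` with values in the simplex `Δ²`, deterministic strictly positive initial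
condition and, conditionally on `𝔉 n`, the six possible transitions have the prescribed
probabilities. -/
structure RPSChain {Ω : Type*} [MeasurableSpace Ω] (μ : Measure Ω) (γ₀ : ℝ) where
  F : Filtration ℕ ‹MeasurableSpace Ω›
  X : ℕ → Ω → ℝ
  Y : ℕ → Ω → ℝ
  Z : ℕ → Ω → ℝ
  adapted_X : Adapted F X
  adapted_Y : Adapted F Y
  adapted_Z : Adapted F Z
  nonneg_X : ∀ n ω, 0 ≤ X n ω
  nonneg_Y : ∀ n ω, 0 ≤ Y n ω
  nonneg_Z : ∀ n ω, 0 ≤ Z n ω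
  sum_eq_one : ∀ n ω, X n ω + Y n ω + Z n ω = 1
  init_X_pos : ∀ ω, 0 < X 0 ω
  init_Y_pos : ∀ ω, 0 < Y 0 ω
  init_Z_pos : ∀ ω, 0 < Z 0 ω
  init_X_const : ∀ ω ω', X 0 ω = X 0 ω'
  init_Y_const : ∀ ω ω', Y 0 ω = Y 0 ω'
  init_Z_const : ∀ ω ω', Z 0 ω = Z 0 ω'
  step : ∀ (n : ℕ) (i : Fin 6),
    μ[Set.indicator
        {ω | X (n+1) ω = (rpsGamma γ₀ n * X n ω + (rpsIncr i).1) / rpsGamma γ₀ (n+1) ∧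
             Y (n+1) ω = (rpsGamma γ₀ n * Y n ω + (rpsIncr i).2.1) / rpsGamma γ₀ (n+1) ∧
             Z (n+1) ω = (rpsGamma γ₀ n * Z n ω + (rpsIncr i).2.2) / rpsGamma γ₀ (n+1)}
        (fun _ => (1 : ℝ)) | F n]
      =ᵐ[μ] fun ω => rpsProb i (X n ω) (Y n ω) (Z n ω)

/-!
Write `w_n = γ_n • (X_n, Y_n, Z_n)` for the unnormalised weights; they never decrease, so they
stay above some `c > 0`. For `κ ≥ 96 / c²` the process `V_n = -log M_n + κ ∑ (1 + w_n,j)⁻¹` is a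
nonnegative supermartingale. Indeed, since the transition probabilities are quadratic, the
first-order expected increase of `∑ log w_n,j` is `12 / γ_n ≥ 3 log (γ_{n+1} / γ_n)`, while the
second-order loss `a² / w² ≤ 16 / w²` of the logarithm under an increment `a ∈ {1, 3, 4}` is paid
for by the decrease `κ a / ((1 + w) (1 + w + a)) ≥ 16 / w²` of the correction. So `V_n` converges
almost surely; the correction is monotone and bounded, hence `log M_n` converges to a finite limit.
-/

open Function

section Probability

variable {Ω : Type*} {m m0 : MeasurableSpace Ω} {μ : Measure Ω}

lemma ae_mem_iUnion_of_condExp_indicator [IsProbabilityMeasure μ] {ι : Type*} [Fintype ι]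
    {A : ι → Set Ω} {p : ι → Ω → ℝ} (hm : m ≤ m0) (hA : ∀ i, MeasurableSet (A i))
    (hdisj : Pairwise (Disjoint on A))
    (hp : ∀ i, μ[(A i).indicator (fun _ => (1 : ℝ)) | m] =ᵐ[μ] p i)
    (hsum : ∀ ω, ∑ i, p i ω = 1) :
    ∀ᵐ ω ∂μ, ω ∈ ⋃ i, A i := by
  rw [ae_mem_iff_measure_eq (MeasurableSet.iUnion hA).nullMeasurableSet, measure_univ,
    ← ENNReal.toReal_eq_one_iff]
  have hmass : ∀ i, μ.real (A i) = ∫ ω, p i ω ∂μ := fun i => calc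
    μ.real (A i) = ∫ ω, (A i).indicator (fun _ => (1 : ℝ)) ω ∂μ :=
      (integral_indicator_one (hA i)).symm
    _ = ∫ ω, (μ[(A i).indicator (fun _ => (1 : ℝ)) | m]) ω ∂μ := (integral_condExp hm).symm
    _ = ∫ ω, p i ω ∂μ := integral_congr_ae (hp i)
  calc μ.real (⋃ i, A i) = ∑ i, μ.real (A i) := measureReal_iUnion_fintype hdisj hA
    _ = ∫ ω, ∑ i, p i ω ∂μ := by
      rw [integral_finsetSum _ fun i _ => integrable_condExp.congr (hp i)]
      exact Finset.sum_congr rfl fun i _ => hmass i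
    _ = 1 := by simp [hsum]

lemma condExp_ae_eq_sum_mul_of_eqOn [IsFiniteMeasure μ] {ι : Type*} [Fintype ι]
    {f : Ω → ℝ} {A : ι → Set Ω} {F p : ι → Ω → ℝ} (hf : Integrable f μ)
    (hA : ∀ i, MeasurableSet (A i)) (hdisj : Pairwise (Disjoint on A))
    (hcover : ∀ᵐ ω ∂μ, ω ∈ ⋃ i, A i) (hF : ∀ i, StronglyMeasurable[m] (F i))
    (hfF : ∀ i, EqOn f (F i) (A i))
    (hp : ∀ i, μ[(A i).indicator (fun _ => (1 : ℝ)) | m] =ᵐ[μ] p i) :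
    μ[f | m] =ᵐ[μ] fun ω => ∑ i, F i ω * p i ω := by
  have hpiece : ∀ i, F i * (A i).indicator (fun _ => (1 : ℝ)) = (A i).indicator f := by
    intro i; ext ω
    by_cases hω : ω ∈ A i
    · simp [hω, hfF i hω]
    · simp [hω]
  have hdecomp : f =ᵐ[μ] ∑ i, F i * (A i).indicator (fun _ => (1 : ℝ)) := by
    filter_upwards [hcover] with ω hω
    obtain ⟨i, hi⟩ := mem_iUnion.mp hω
    simp only [hpiece, Finset.sum_apply]
    rw [Finset.sum_eq_single i (fun j _ hji => indicator_of_notMem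
      (Set.disjoint_left.mp (hdisj hji.symm) hi) f) (by simp), indicator_of_mem hi]
  have hint : ∀ i, Integrable (F i * (A i).indicator (fun _ => (1 : ℝ))) μ := fun i =>
    hpiece i ▸ hf.indicator (hA i)
  have hterm : ∀ i, μ[F i * (A i).indicator (fun _ => (1 : ℝ)) | m] =ᵐ[μ] F i * p i := fun i =>
    (condExp_mul_of_stronglyMeasurable_left (hF i) (hint i)
      ((integrable_const 1).indicator (hA i))).trans ((ae_eq_refl _).mul (hp i))
  filter_upwards [condExp_congr_ae hdecomp, condExp_finsetSum (fun i _ => hint i) m,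
    ae_all_iff.2 hterm] with ω hdecompω hsumω htermω
  rw [hdecompω, hsumω, Finset.sum_apply]
  exact Finset.sum_congr rfl fun i _ => htermω i

theorem MeasureTheory.Supermartingale.exists_ae_tendsto_of_nonneg [IsFiniteMeasure μ]
    {ℱ : Filtration ℕ m0} {f : ℕ → Ω → ℝ} (hf : Supermartingale f ℱ μ)
    (hnonneg : ∀ n, 0 ≤ᵐ[μ] f n) :
    ∀ᵐ ω ∂μ, ∃ c, Tendsto (fun n => f n ω) atTop (𝓝 c) := by
  have hbdd : ∀ n, eLpNorm ((-f) n) 1 μ ≤ ENNReal.ofReal (∫ ω, f 0 ω ∂μ) := by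
    intro n
    rw [Pi.neg_apply, eLpNorm_neg, eLpNorm_one_eq_lintegral_enorm,
      ← ofReal_integral_norm_eq_lintegral_enorm (hf.integrable n)]
    refine ENNReal.ofReal_le_ofReal ?_
    calc ∫ ω, ‖f n ω‖ ∂μ = ∫ ω, f n ω ∂μ :=
          integral_congr_ae ((hnonneg n).mono fun ω h => Real.norm_of_nonneg h)
      _ ≤ ∫ ω, f 0 ω ∂μ := by
          simpa using hf.setIntegral_le (Nat.zero_le n) MeasurableSet.univ
  filter_upwards [hf.neg.exists_ae_tendsto_of_bdd hbdd] with ω ⟨c, hc⟩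
  exact ⟨-c, by simpa using hc.neg⟩

end Probability

def rpsPhi (κ u : ℝ) : ℝ := Real.log u - κ / (1 + u)

def rpsLyap (κ γ : ℝ) (w : ℝ × ℝ × ℝ) : ℝ :=
  3 * Real.log γ - (rpsPhi κ w.1 + rpsPhi κ w.2.1 + rpsPhi κ w.2.2)

lemma sixteen_div_sq_le_div_sub_div {κ cc u a : ℝ} (hcc : 0 < cc) (hcc1 : cc ≤ 1)
    (hκ : 96 ≤ κ * cc ^ 2) (hu : cc ≤ u) (ha : 1 ≤ a) :
    16 / u ^ 2 ≤ κ / (1 + u) - κ / (1 + u + a) := by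
  have hu0 : 0 < u := hcc.trans_le hu
  have h1 : (1 + u) * cc ≤ 2 * u := by nlinarith
  have h2 : (2 + u) * cc ≤ 3 * u := by nlinarith
  have hscaled : 16 * ((1 + u) * (2 + u)) * cc ^ 2 ≤ κ * u ^ 2 * cc ^ 2 := by
    have := mul_le_mul h1 h2 (by positivity) (by positivity)
    nlinarith
  have hquad : 16 * ((1 + u) * (2 + u)) ≤ κ * u ^ 2 :=
    le_of_mul_le_mul_right hscaled (by positivity)
  rw [div_sub_div _ _ (by positivity) (by positivity),
    div_le_div_iff₀ (by positivity) (by positivity)]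
  nlinarith [mul_le_mul_of_nonneg_left (show 1 + u + a ≤ a * (2 + u) by nlinarith)
    (show 0 ≤ 16 * (1 + u) by positivity)]

lemma div_le_rpsPhi_add_sub {κ cc u a : ℝ} (hcc : 0 < cc) (hcc1 : cc ≤ 1)
    (hκ : 96 ≤ κ * cc ^ 2) (hu : cc ≤ u) (ha : 1 ≤ a) (ha4 : a ≤ 4) :
    a / u ≤ rpsPhi κ (u + a) - rpsPhi κ u := by
  have hu0 : 0 < u := hcc.trans_le hu
  have hlog : a / u - a ^ 2 / u ^ 2 ≤ Real.log (u + a) - Real.log u := by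
    rw [← Real.log_div (by positivity) hu0.ne']
    have hlb := Real.one_sub_inv_le_log_of_pos (x := (u + a) / u) (by positivity)
    have heq : 1 - ((u + a) / u)⁻¹ = a / (u + a) := by field_simp; ring
    have hquad : a / u - a ^ 2 / u ^ 2 ≤ a / (u + a) := by
      rw [div_sub_div _ _ hu0.ne' (by positivity), div_le_div_iff₀ (by positivity) (by positivity)]
      nlinarith [pow_pos hu0 3, mul_pos (pow_pos hu0 2) (show 0 < a by linarith)]
    linarith
  have hcorr := sixteen_div_sq_le_div_sub_div hcc hcc1 hκ hu ha
  have ha2 : a ^ 2 / u ^ 2 ≤ 16 / u ^ 2 := by gcongr; nlinarith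
  unfold rpsPhi
  rw [show 1 + (u + a) = 1 + u + a by ring]
  linarith

lemma div_le_weighted_rpsPhi_increments {κ cc γ x y z : ℝ} (hcc : 0 < cc) (hcc1 : cc ≤ 1)
    (hκ : 96 ≤ κ * cc ^ 2) (hγ : 0 < γ) (hx : cc ≤ γ * x) (hy : 0 ≤ y) (hz : 0 ≤ z) :
    (4 * x + 2 * y + 6 * z) / γ ≤
      x ^ 2 * (rpsPhi κ (γ * x + 4) - rpsPhi κ (γ * x))
      + 2 * x * y * (rpsPhi κ (γ * x + 1) - rpsPhi κ (γ * x))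
      + 2 * z * x * (rpsPhi κ (γ * x + 3) - rpsPhi κ (γ * x)) := by
  have hx0 : 0 < x := pos_of_mul_pos_right (hcc.trans_le hx) hγ.le
  have g4 := div_le_rpsPhi_add_sub (a := 4) hcc hcc1 hκ hx (by norm_num) le_rfl
  have g1 := div_le_rpsPhi_add_sub (a := 1) hcc hcc1 hκ hx le_rfl (by norm_num)
  have g3 := div_le_rpsPhi_add_sub (a := 3) hcc hcc1 hκ hx (by norm_num) (by norm_num)
  calc (4 * x + 2 * y + 6 * z) / γ
      = x ^ 2 * (4 / (γ * x)) + 2 * x * y * (1 / (γ * x)) + 2 * z * x * (3 / (γ * x)) := by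
        field_simp; ring
    _ ≤ _ := by gcongr

lemma log_add_four_sub_log_le {γ : ℝ} (hγ : 0 < γ) : Real.log (γ + 4) - Real.log γ ≤ 4 / γ := by
  rw [← Real.log_div (by positivity) hγ.ne']
  calc Real.log ((γ + 4) / γ) ≤ (γ + 4) / γ - 1 := Real.log_le_sub_one_of_pos (by positivity)
    _ = 4 / γ := by field_simp; ring

lemma sum_rpsProb_eq_one {x y z : ℝ} (h : x + y + z = 1) : ∑ i, rpsProb i x y z = 1 := by
  simp only [Fin.sum_univ_six, rpsProb]
  linear_combination (x + y + z + 1) * h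

lemma sum_rpsLyap_mul_rpsProb_le {κ cc γ x y z : ℝ} (hcc : 0 < cc) (hcc1 : cc ≤ 1)
    (hκ : 96 ≤ κ * cc ^ 2) (hγ : 0 < γ) (hsum : x + y + z = 1)
    (hx : cc ≤ γ * x) (hy : cc ≤ γ * y) (hz : cc ≤ γ * z) :
    ∑ i, rpsLyap κ (γ + 4) ((γ * x, γ * y, γ * z) + rpsIncr i) * rpsProb i x y z ≤
      rpsLyap κ γ (γ * x, γ * y, γ * z) := by
  have hx0 : 0 ≤ x := (pos_of_mul_pos_right (hcc.trans_le hx) hγ.le).le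
  have hy0 : 0 ≤ y := (pos_of_mul_pos_right (hcc.trans_le hy) hγ.le).le
  have hz0 : 0 ≤ z := (pos_of_mul_pos_right (hcc.trans_le hz) hγ.le).le
  have gx := div_le_weighted_rpsPhi_increments hcc hcc1 hκ hγ hx hy0 hz0
  have gy := div_le_weighted_rpsPhi_increments hcc hcc1 hκ hγ hy hz0 hx0
  have gz := div_le_weighted_rpsPhi_increments hcc hcc1 hκ hγ hz hx0 hy0
  have hlog := log_add_four_sub_log_le hγ
  have hp := sum_rpsProb_eq_one hsum
  simp only [Fin.sum_univ_six, rpsProb, rpsIncr, rpsLyap, Prod.mk_add_mk, add_zero] at hp ⊢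
  linear_combination gx + gy + gz + 3 * hlog - 12 / γ * hsum
    + (3 * Real.log (γ + 4) - (rpsPhi κ (γ * x) + rpsPhi κ (γ * y) + rpsPhi κ (γ * z))) * hp

lemma rpsLyap_nonneg {κ γ cc : ℝ} {w : ℝ × ℝ × ℝ} (hκ : 0 ≤ κ) (hcc : 0 < cc)
    (hlow : (cc, cc, cc) ≤ w) (hup : w ≤ (γ, γ, γ)) : 0 ≤ rpsLyap κ γ w := by
  obtain ⟨a, b, d⟩ := w
  simp only [Prod.mk_le_mk] at hlow hup
  have la := Real.log_le_log (hcc.trans_le hlow.1) hup.1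
  have lb := Real.log_le_log (hcc.trans_le hlow.2.1) hup.2.1
  have ld := Real.log_le_log (hcc.trans_le hlow.2.2) hup.2.2
  have : 0 ≤ κ / (1 + a) + κ / (1 + b) + κ / (1 + d) := by
    have := hcc.trans_le hlow.1; have := hcc.trans_le hlow.2.1; have := hcc.trans_le hlow.2.2
    positivity
  simp only [rpsLyap, rpsPhi]
  linarith

lemma rpsLyap_le {κ γ cc : ℝ} {w : ℝ × ℝ × ℝ} (hκ : 0 ≤ κ) (hcc : 0 < cc)
    (hlow : (cc, cc, cc) ≤ w) : rpsLyap κ γ w ≤ 3 * (Real.log γ - Real.log cc) + 3 * κ := by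
  obtain ⟨a, b, d⟩ := w
  simp only [Prod.mk_le_mk] at hlow
  obtain ⟨ha, hb, hd⟩ := hlow
  have la := Real.log_le_log hcc ha
  have lb := Real.log_le_log hcc hb
  have ld := Real.log_le_log hcc hd
  have ka : κ / (1 + a) ≤ κ := div_le_self hκ (by linarith)
  have kb : κ / (1 + b) ≤ κ := div_le_self hκ (by linarith)
  have kd : κ / (1 + d) ≤ κ := div_le_self hκ (by linarith)
  simp only [rpsLyap, rpsPhi]
  linarith

lemma log_mul_mul_eq_sub_rpsLyap {κ γ x y z : ℝ} (hγ : 0 < γ) (hx : 0 < x) (hy : 0 < y)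
    (hz : 0 < z) :
    Real.log (x * y * z) = κ * ((1 + γ * x)⁻¹ + (1 + γ * y)⁻¹ + (1 + γ * z)⁻¹)
      - rpsLyap κ γ (γ * x, γ * y, γ * z) := by
  simp only [rpsLyap, rpsPhi]
  rw [Real.log_mul (by positivity) hz.ne', Real.log_mul hx.ne' hy.ne',
    Real.log_mul hγ.ne' hx.ne', Real.log_mul hγ.ne' hy.ne', Real.log_mul hγ.ne' hz.ne']
  ring

lemma measurable_rpsLyap (κ γ : ℝ) : Measurable (rpsLyap κ γ) := by
  unfold rpsLyap rpsPhi
  fun_prop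

lemma rpsGamma_pos {γ₀ : ℝ} (hγ₀ : 0 < γ₀) (n : ℕ) : 0 < rpsGamma γ₀ n := by
  unfold rpsGamma; positivity

lemma rpsGamma_succ (γ₀ : ℝ) (n : ℕ) : rpsGamma γ₀ (n + 1) = rpsGamma γ₀ n + 4 := by
  simp only [rpsGamma]; push_cast; ring

lemma rpsIncr_injective : Injective rpsIncr := by
  intro i j h
  fin_cases i <;> fin_cases j <;> first | rfl | norm_num [rpsIncr] at h

lemma rpsIncr_nonneg (i : Fin 6) : 0 ≤ rpsIncr i := by
  fin_cases i <;> norm_num [rpsIncr, Prod.le_def]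

namespace RPSChain

variable {Ω : Type*} [MeasurableSpace Ω] {μ : Measure Ω} {γ₀ : ℝ} (c : RPSChain μ γ₀)

def weight (n : ℕ) (ω : Ω) : ℝ × ℝ × ℝ :=
  (rpsGamma γ₀ n * c.X n ω, rpsGamma γ₀ n * c.Y n ω, rpsGamma γ₀ n * c.Z n ω)

-- Spelled exactly as the event in `RPSChain.step`, so that `c.step n i` is about it.
def transition (n : ℕ) (i : Fin 6) : Set Ω :=
  {ω | c.X (n+1) ω = (rpsGamma γ₀ n * c.X n ω + (rpsIncr i).1) / rpsGamma γ₀ (n+1) ∧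
       c.Y (n+1) ω = (rpsGamma γ₀ n * c.Y n ω + (rpsIncr i).2.1) / rpsGamma γ₀ (n+1) ∧
       c.Z (n+1) ω = (rpsGamma γ₀ n * c.Z n ω + (rpsIncr i).2.2) / rpsGamma γ₀ (n+1)}

def lyapProcess (κ : ℝ) (n : ℕ) (ω : Ω) : ℝ := rpsLyap κ (rpsGamma γ₀ n) (c.weight n ω)

variable {c}

lemma mem_transition_iff (hγ₀ : 0 < γ₀) {n : ℕ} {i : Fin 6} {ω : Ω} :
    ω ∈ c.transition n i ↔ c.weight (n + 1) ω = c.weight n ω + rpsIncr i := by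
  have hγ := (rpsGamma_pos hγ₀ (n + 1)).ne'
  simp only [transition, weight, Set.mem_ofPred_eq, Prod.ext_iff, Prod.fst_add, Prod.snd_add,
    eq_div_iff hγ, mul_comm (rpsGamma γ₀ (n + 1))]

lemma weight_le (hγ₀ : 0 < γ₀) (n : ℕ) (ω : Ω) :
    c.weight n ω ≤ (rpsGamma γ₀ n, rpsGamma γ₀ n, rpsGamma γ₀ n) := by
  have hγ := (rpsGamma_pos hγ₀ n).le
  have := c.sum_eq_one n ω; have := c.nonneg_X n ω; have := c.nonneg_Y n ω
  have := c.nonneg_Z n ω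
  simp only [weight, Prod.mk_le_mk]
  refine ⟨?_, ?_, ?_⟩ <;> apply mul_le_of_le_one_right hγ <;> linarith

lemma measurable_weight (n : ℕ) : Measurable[c.F n] (c.weight n) :=
  ((c.adapted_X n).const_mul _).prodMk (((c.adapted_Y n).const_mul _).prodMk
    ((c.adapted_Z n).const_mul _))

lemma measurableSet_transition (hγ₀ : 0 < γ₀) (n : ℕ) (i : Fin 6) :
    MeasurableSet (c.transition n i) := by
  have h : c.transition n i = {ω | c.weight (n + 1) ω = c.weight n ω + rpsIncr i} :=
    Set.ext fun ω => mem_transition_iff hγ₀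
  rw [h]
  exact measurableSet_eq_fun ((measurable_weight (n + 1)).mono (c.F.le _) le_rfl)
    (((measurable_weight n).mono (c.F.le _) le_rfl).add_const _)

lemma pairwise_disjoint_transition (hγ₀ : 0 < γ₀) (n : ℕ) :
    Pairwise (Disjoint on c.transition n) := by
  intro i j hij
  refine Set.disjoint_left.mpr fun ω hi hj => hij (rpsIncr_injective ?_)
  rw [mem_transition_iff hγ₀] at hi hj
  exact add_left_cancel (hi.symm.trans hj)

lemma ae_exists_mem_transition [IsProbabilityMeasure μ] (hγ₀ : 0 < γ₀) :
    ∀ᵐ ω ∂μ, ∀ n, ∃ i, ω ∈ c.transition n i := by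
  refine ae_all_iff.mpr fun n => ?_
  simpa using ae_mem_iUnion_of_condExp_indicator (c.F.le n) (measurableSet_transition hγ₀ n)
    (pairwise_disjoint_transition hγ₀ n) (c.step n)
    (fun ω => sum_rpsProb_eq_one (c.sum_eq_one n ω))

lemma monotone_weight (hγ₀ : 0 < γ₀) {ω : Ω} (hω : ∀ n, ∃ i, ω ∈ c.transition n i) :
    Monotone (c.weight · ω) := by
  refine monotone_nat_of_le_succ fun n => ?_
  obtain ⟨i, hi⟩ := hω n
  rw [(mem_transition_iff hγ₀).mp hi]
  exact le_add_of_nonneg_right (rpsIncr_nonneg i)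

lemma exists_le_weight_zero [Nonempty Ω] (hγ₀ : 0 < γ₀) :
    ∃ cc, 0 < cc ∧ cc ≤ 1 ∧ ∀ ω, (cc, cc, cc) ≤ c.weight 0 ω := by
  obtain ⟨ω₀⟩ := ‹Nonempty Ω›
  have hγ : rpsGamma γ₀ 0 = γ₀ := by simp [rpsGamma]
  refine ⟨min 1 (γ₀ * min (c.X 0 ω₀) (min (c.Y 0 ω₀) (c.Z 0 ω₀))), ?_, min_le_left _ _,
    fun ω => ?_⟩
  · have := c.init_X_pos ω₀; have := c.init_Y_pos ω₀; have := c.init_Z_pos ω₀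
    exact lt_min one_pos (by positivity)
  · simp only [weight, hγ, Prod.mk_le_mk, ← c.init_X_const ω₀ ω, ← c.init_Y_const ω₀ ω,
      ← c.init_Z_const ω₀ ω]
    refine ⟨?_, ?_, ?_⟩ <;> refine (min_le_right _ _).trans (mul_le_mul_of_nonneg_left ?_ hγ₀.le)
    · exact min_le_left _ _
    · exact (min_le_right _ _).trans (min_le_left _ _)
    · exact (min_le_right _ _).trans (min_le_right _ _)

lemma adapted_lyapProcess (κ : ℝ) : Adapted c.F (c.lyapProcess κ) :=
  fun n => (measurable_rpsLyap _ _).comp (measurable_weight n)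

lemma ae_nonneg_lyapProcess (hγ₀ : 0 < γ₀) {κ cc : ℝ} (hκ : 0 ≤ κ) (hcc : 0 < cc)
    (hlow : ∀ᵐ ω ∂μ, ∀ n, (cc, cc, cc) ≤ c.weight n ω) (n : ℕ) :
    0 ≤ᵐ[μ] c.lyapProcess κ n :=
  hlow.mono fun ω h => rpsLyap_nonneg hκ hcc (h n) (weight_le hγ₀ n ω)

lemma integrable_lyapProcess [IsFiniteMeasure μ] (hγ₀ : 0 < γ₀) {κ cc : ℝ} (hκ : 0 ≤ κ)
    (hcc : 0 < cc) (hlow : ∀ᵐ ω ∂μ, ∀ n, (cc, cc, cc) ≤ c.weight n ω) (n : ℕ) :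
    Integrable (c.lyapProcess κ n) μ := by
  refine .of_bound ((adapted_lyapProcess κ n).mono (c.F.le n) le_rfl).aestronglyMeasurable
    (3 * (Real.log (rpsGamma γ₀ n) - Real.log cc) + 3 * κ) ?_
  filter_upwards [hlow] with ω h
  rw [Real.norm_of_nonneg (show 0 ≤ c.lyapProcess κ n ω from
    rpsLyap_nonneg hκ hcc (h n) (weight_le hγ₀ n ω))]
  exact rpsLyap_le hκ hcc (h n)

lemma lyapProcess_succ_eqOn (hγ₀ : 0 < γ₀) (κ : ℝ) (n : ℕ) (i : Fin 6) :
    EqOn (c.lyapProcess κ (n + 1))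
      (fun ω => rpsLyap κ (rpsGamma γ₀ n + 4) (c.weight n ω + rpsIncr i)) (c.transition n i) :=
  fun ω hω => by simp only [lyapProcess, rpsGamma_succ, (mem_transition_iff hγ₀).mp hω]

lemma supermartingale_lyapProcess [IsProbabilityMeasure μ] (hγ₀ : 0 < γ₀) {κ cc : ℝ}
    (hcc : 0 < cc) (hcc1 : cc ≤ 1) (hκ : 96 ≤ κ * cc ^ 2)
    (hlow : ∀ᵐ ω ∂μ, ∀ n, (cc, cc, cc) ≤ c.weight n ω) :
    Supermartingale (c.lyapProcess κ) c.F μ := by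
  have hκ0 : 0 ≤ κ := nonneg_of_mul_nonneg_left (by linarith) (pow_pos hcc 2)
  have hint := integrable_lyapProcess hγ₀ hκ0 hcc hlow
  refine supermartingale_nat (adapted_lyapProcess κ).stronglyAdapted hint fun n => ?_
  have hcover : ∀ᵐ ω ∂μ, ω ∈ ⋃ i, c.transition n i :=
    (ae_exists_mem_transition hγ₀).mono fun ω h => mem_iUnion.mpr (h n)
  have hce := condExp_ae_eq_sum_mul_of_eqOn (hint (n + 1)) (measurableSet_transition hγ₀ n)
    (pairwise_disjoint_transition hγ₀ n) hcover
    (fun i => ((measurable_rpsLyap _ _).comp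
      ((measurable_weight n).add_const _)).stronglyMeasurable)
    (lyapProcess_succ_eqOn hγ₀ κ n) (c.step n)
  filter_upwards [hce, hlow] with ω hω hlowω
  obtain ⟨hx, hy, hz⟩ := hlowω n
  rw [hω]
  exact sum_rpsLyap_mul_rpsProb_le hcc hcc1 hκ (rpsGamma_pos hγ₀ n) (c.sum_eq_one n ω) hx hy hz

lemma exists_tendsto_pos_of_tendsto_lyapProcess (hγ₀ : 0 < γ₀) {κ cc L : ℝ} {ω : Ω}
    (hcc : 0 < cc) (hmono : Monotone (c.weight · ω)) (hlow : ∀ n, (cc, cc, cc) ≤ c.weight n ω)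
    (hL : Tendsto (c.lyapProcess κ · ω) atTop (𝓝 L)) :
    ∃ M, 0 < M ∧ Tendsto (fun n => c.X n ω * c.Y n ω * c.Z n ω) atTop (𝓝 M) := by
  have hpos : ∀ n, 0 < c.X n ω ∧ 0 < c.Y n ω ∧ 0 < c.Z n ω := fun n => by
    obtain ⟨hx, hy, hz⟩ := hlow n
    have hγ := (rpsGamma_pos hγ₀ n).le
    exact ⟨pos_of_mul_pos_right (hcc.trans_le hx) hγ, pos_of_mul_pos_right (hcc.trans_le hy) hγ,
      pos_of_mul_pos_right (hcc.trans_le hz) hγ⟩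
  set S : ℕ → ℝ := fun n => (1 + (c.weight n ω).1)⁻¹ + (1 + (c.weight n ω).2.1)⁻¹
    + (1 + (c.weight n ω).2.2)⁻¹ with hS_def
  have hS : Antitone S := fun m n hmn => by
    obtain ⟨hx, hy, hz⟩ := hlow m
    obtain ⟨hmx, hmy, hmz⟩ := hmono hmn
    have := hcc.trans_le hx; have := hcc.trans_le hy; have := hcc.trans_le hz
    simp only [hS_def]
    gcongr
  have hSb : BddBelow (range S) := ⟨0, by
    rintro _ ⟨n, rfl⟩
    obtain ⟨hx, hy, hz⟩ := hlow n
    have := hcc.trans_le hx; have := hcc.trans_le hy; have := hcc.trans_le hz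
    positivity⟩
  have hlog : Tendsto (fun n => Real.log (c.X n ω * c.Y n ω * c.Z n ω)) atTop
      (𝓝 (κ * (⨅ n, S n) - L)) :=
    (((tendsto_atTop_ciInf hS hSb).const_mul κ).sub hL).congr fun n => by
      obtain ⟨hx, hy, hz⟩ := hpos n
      exact (log_mul_mul_eq_sub_rpsLyap (rpsGamma_pos hγ₀ n) hx hy hz).symm
  refine ⟨Real.exp (κ * (⨅ n, S n) - L), Real.exp_pos _, ?_⟩
  refine ((Real.continuous_exp.tendsto _).comp hlog).congr fun n => ?_
  obtain ⟨hx, hy, hz⟩ := hpos n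
  exact Real.exp_log (by positivity)

end RPSChain

/-- Almost surely `liminf M_n > 0`; in particular any almost sure limit of `M_n`
is `> 0`. -/
theorem rps_liminf_pos
    {Ω : Type*} [MeasurableSpace Ω] (μ : Measure Ω) [IsProbabilityMeasure μ]
    (γ₀ : ℝ) (hγ₀ : 2 ≤ γ₀) (c : RPSChain μ γ₀) :
    ∀ᵐ ω ∂μ,
      0 < liminf (fun n => c.X n ω * c.Y n ω * c.Z n ω) atTop ∧
      (∀ M : ℝ, Tendsto (fun n => c.X n ω * c.Y n ω * c.Z n ω) atTop (𝓝 M) → 0 < M) := by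
  have hγ₀' : 0 < γ₀ := by linarith
  have := nonempty_of_isProbabilityMeasure μ
  obtain ⟨cc, hcc, hcc1, hinit⟩ := c.exists_le_weight_zero hγ₀'
  have hκ : 96 ≤ 96 / cc ^ 2 * cc ^ 2 := by rw [div_mul_cancel₀ _ (pow_pos hcc 2).ne']
  have hmono : ∀ᵐ ω ∂μ, Monotone (c.weight · ω) :=
    c.ae_exists_mem_transition hγ₀' |>.mono fun ω h => c.monotone_weight hγ₀' h
  have hlow : ∀ᵐ ω ∂μ, ∀ n, (cc, cc, cc) ≤ c.weight n ω :=
    hmono.mono fun ω h n => (hinit ω).trans (h n.zero_le)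
  have hconv := (c.supermartingale_lyapProcess hγ₀' hcc hcc1 hκ hlow).exists_ae_tendsto_of_nonneg
    (c.ae_nonneg_lyapProcess hγ₀' (by positivity) hcc hlow)
  filter_upwards [hconv, hmono, hlow] with ω ⟨L, hL⟩ hmonoω hlowω
  obtain ⟨M, hM, hMt⟩ := c.exists_tendsto_pos_of_tendsto_lyapProcess hγ₀' hcc hmonoω hlowω hL
  exact ⟨hMt.liminf_eq ▸ hM, fun M' hM' => tendsto_nhds_unique hMt hM' ▸ hM⟩
end
end

section
/- For every probability vector p on {1,…,n} and all m, k, one has q_{n,m,k}(p) ≤ q_{n,m,k}(u), where u = (1/n,…,1/n) is the uniform probability vector. Moreover, if n ≥ k, m ≥ k and k ≥ 2, then equality holds only when p = u; i.e. the uniform vector is the unique maximiser of q_{n,m,k}. -/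
/-!
Moving mass between two coordinates `p i`, `p j` towards their average never decreases `q`.
Group the sample functions by the function obtained from merging the value `j` into `i`: within a
group in which `a` samples land in `{i, j}`, the total weight is a constant minus a non-negative
multiple of `p i ^ a + p j ^ a`, and `x ^ a + (c - x) ^ a` is convex and symmetric in `x`.
Finitely many such transfers reach the uniform vector. For uniqueness, a maximal `q p` is positive,
so `p` has `k` points of positive mass; if `p i ≠ p j`, a group with `a ≥ 2` whose `k - 2` other
values are such points has a positive coefficient, and strict convexity of `x ^ a` makes averaging
`p i` and `p j` strictly increase `q`.
-/

open Finset Function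

noncomputable section

/-- `q n m k p` is the probability that `m` i.i.d. samples from the probability vector `p`
on `{1,…,n}` take at least `k` different values: the sum over all functions
`s : Fin m → Fin n` whose image has at least `k` elements of `∏ j, p (s j)`. -/
def q (n m k : ℕ) (p : Fin n → ℝ) : ℝ :=
  ∑ s ∈ Finset.univ.filter (fun s : Fin m → Fin n => k ≤ (Finset.univ.image s).card),
    ∏ j, p (s j)

theorem pow_add_pow_le_of_mem_uIcc (a : ℕ) {x y x' : ℝ} (hx : 0 ≤ x) (hy : 0 ≤ y)
    (hx' : x' ∈ Set.uIcc x y) : x' ^ a + (x + y - x') ^ a ≤ x ^ a + y ^ a := by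
  have hconv : ConvexOn ℝ (Set.Icc 0 (x + y)) fun z : ℝ => z ^ a + (x + y - z) ^ a := by
    refine ((convexOn_pow a).subset (fun z hz => hz.1) (convex_Icc _ _)).add ?_
    refine ((convexOn_pow a).comp_affineMap (AffineMap.const ℝ ℝ (x + y) - AffineMap.id ℝ ℝ)).subset
      (fun z hz => ?_) (convex_Icc _ _)
    simpa using hz.2
  have h := hconv.le_on_segment ⟨hx, by linarith⟩ ⟨hy, by linarith⟩
    (by rwa [segment_eq_uIcc])
  simp only [add_sub_cancel_left, add_sub_cancel_right] at h
  simpa [add_comm] using h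

theorem two_mul_half_pow_lt {a : ℕ} (ha : 2 ≤ a) {x y : ℝ} (hx : 0 ≤ x) (hy : 0 ≤ y)
    (hxy : x ≠ y) : 2 * ((x + y) / 2) ^ a < x ^ a + y ^ a := by
  have h := (strictConvexOn_pow ha).2 (Set.mem_Ici.2 hx) (Set.mem_Ici.2 hy) hxy
    (by norm_num : (0 : ℝ) < 1 / 2) (by norm_num : (0 : ℝ) < 1 / 2) (by norm_num)
  simp only [smul_eq_mul] at h
  rw [show 1 / 2 * x + 1 / 2 * y = (x + y) / 2 by ring] at h
  linarith

theorem add_div_two_mem_uIcc (a b : ℝ) : (a + b) / 2 ∈ Set.uIcc a b := by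
  rcases le_total a b with h | h
  · exact Set.mem_uIcc.2 (Or.inl ⟨by linarith, by linarith⟩)
  · exact Set.mem_uIcc.2 (Or.inr ⟨by linarith, by linarith⟩)

theorem eq_uniform_of_forall_eq {α : Type*} [Fintype α] {p : α → ℝ} (hsum : ∑ l, p l = 1)
    (h : ∀ i j, p i = p j) : p = fun _ => 1 / (Fintype.card α : ℝ) := by
  funext l
  have hconst : ∑ l', p l' = Fintype.card α * p l := by simp [h _ l]
  rw [eq_div_iff (Nat.cast_ne_zero.2 (@Fintype.card_ne_zero _ _ ⟨l⟩))]
  linarith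

theorem card_eq_of_subset_of_subset_insert_insert {α : Type*} [DecidableEq α] {i j : α}
    {B X : Finset α} (hij : i ≠ j) (hi : i ∉ B) (hj : j ∉ B) (hBX : B ⊆ X)
    (hX : X ⊆ insert i (insert j B)) :
    #X = #B + (if i ∈ X then 1 else 0) + (if j ∈ X then 1 else 0) := by
  have hdiff : X \ B = ({i, j} : Finset α).filter (· ∈ X) := by
    ext a
    have := @hX a
    simp only [mem_sdiff, mem_filter, mem_insert, mem_singleton] at this ⊢
    grind
  rw [← card_sdiff_add_card_eq_card hBX, hdiff, card_filter, sum_pair hij]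
  ring

theorem exists_univ_image_eq {ι α : Type*} [Fintype ι] [DecidableEq α] {S : Finset α}
    (hS : S.Nonempty) (hcard : #S ≤ Fintype.card ι) : ∃ s : ι → α, univ.image s = S := by
  obtain ⟨e⟩ : Nonempty (S ↪ ι) := Function.Embedding.nonempty_of_card_le (by simpa using hcard)
  have : Nonempty S := hS.to_subtype
  refine ⟨fun r => (invFun e r : S), ext fun a => ⟨?_, fun ha => ?_⟩⟩
  · simp only [mem_image, mem_univ, true_and]
    rintro ⟨r, rfl⟩
    exact (invFun e r).2
  · exact mem_image.2 ⟨e ⟨a, ha⟩, mem_univ _, by rw [leftInverse_invFun e.injective]⟩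

section Transfer

variable {α : Type*} [DecidableEq α]

def transfer (p : α → ℝ) (i j : α) (x : ℝ) : α → ℝ :=
  p + Pi.single i (x - p i) - Pi.single j (x - p i)

variable {p : α → ℝ} {i j : α} {x : ℝ}

theorem transfer_apply_left (hij : i ≠ j) : transfer p i j x i = x := by
  simp [transfer, hij]

theorem transfer_apply_right (hij : i ≠ j) : transfer p i j x j = p i + p j - x := by
  simp [transfer, hij.symm]; ring

theorem transfer_apply_of_ne {l : α} (hi : l ≠ i) (hj : l ≠ j) : transfer p i j x l = p l := by
  simp [transfer, hi, hj]

theorem transfer_self : transfer p i j (p i) = p := by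
  simp [transfer]

theorem sum_transfer [Fintype α] : ∑ l, transfer p i j x l = ∑ l, p l := by
  simp [transfer, Finset.sum_add_distrib, Finset.sum_sub_distrib]

theorem transfer_nonneg (hp : 0 ≤ p) (hij : i ≠ j) (hx : x ∈ Set.uIcc (p i) (p j)) :
    0 ≤ transfer p i j x := by
  have hpi : 0 ≤ p i := hp i
  have hpj : 0 ≤ p j := hp j
  have hmin := min_add_max (p i) (p j)
  have hx0 : 0 ≤ x := (le_min hpi hpj).trans hx.1
  have hx1 : 0 ≤ p i + p j - x := by linarith [hx.2, le_min hpi hpj]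
  intro l
  by_cases hli : l = i; · subst hli; simpa [transfer_apply_left hij] using hx0
  by_cases hlj : l = j; · subst hlj; simpa [transfer_apply_right hij] using hx1
  simpa [transfer_apply_of_ne hli hlj] using hp l

theorem le_apply_uniform_of_le_transfer [Fintype α] {F : (α → ℝ) → ℝ}
    (hF : ∀ p : α → ℝ, 0 ≤ p → ∀ i j x, i ≠ j → x ∈ Set.uIcc (p i) (p j) →
      F p ≤ F (transfer p i j x))
    (hp : 0 ≤ p) (hsum : ∑ l, p l = 1) : F p ≤ F fun _ => 1 / Fintype.card α := by
  set u : ℝ := 1 / Fintype.card α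
  induction hN : #{l | p l ≠ u} using Nat.strong_induction_on generalizing p with
  | _ N ih =>
  by_cases hconst : ∀ l, p l = u
  · rw [funext hconst]
  obtain ⟨l, hl⟩ := not_forall.1 hconst
  have hu : ∑ _l : α, u = ∑ l, p l := by
    have : (Fintype.card α : ℝ) ≠ 0 := Nat.cast_ne_zero.2 (@Fintype.card_ne_zero _ _ ⟨l⟩)
    simp [u, hsum, this]
  obtain ⟨i, hi⟩ : ∃ i, u < p i := by
    by_contra! h
    exact hl ((sum_eq_sum_iff_of_le fun l _ => h l).1 hu.symm l (mem_univ l))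
  obtain ⟨j, hj⟩ : ∃ j, p j < u := by
    by_contra! h
    exact hl ((sum_eq_sum_iff_of_le fun l _ => h l).1 hu l (mem_univ l)).symm
  have hij : i ≠ j := by rintro rfl; linarith
  have huI : u ∈ Set.uIcc (p i) (p j) := Set.mem_uIcc.2 (Or.inr ⟨hj.le, hi.le⟩)
  have hfewer : #{l | transfer p i j u l ≠ u} < N := by
    rw [← hN]
    refine card_lt_card ((ssubset_iff_of_subset fun l => ?_).2 ⟨i, ?_, ?_⟩)
    · simp only [mem_filter, mem_univ, true_and]
      by_cases hli : l = i; · simp [hli, transfer_apply_left hij]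
      by_cases hlj : l = j; · subst hlj; exact fun _ => hj.ne
      rw [transfer_apply_of_ne hli hlj]; exact id
    · simpa using hi.ne'
    · simp [transfer_apply_left hij]
  calc F p ≤ F (transfer p i j u) := hF p hp i j u hij huI
    _ ≤ F fun _ => u := ih _ hfewer (transfer_nonneg hp hij huI) (sum_transfer.trans hsum) rfl

end Transfer

section Merge

variable {ι α : Type*} [Fintype ι] [DecidableEq α] {i j : α}

theorem prod_ite_eq_pow_mul (t : ι → α) (y : ℝ) (v : α → ℝ) :
    ∏ r, (if t r = i then y else v (t r)) = y ^ #{r | t r = i} * ∏ r with t r ≠ i, v (t r) := by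
  rw [prod_ite, prod_const]

theorem prod_transfer_of_forall_ne {t : ι → α} (ht : ∀ r, t r ≠ j) (p : α → ℝ) (x : ℝ) :
    ∏ r with t r ≠ i, transfer p i j x (t r) = ∏ r with t r ≠ i, p (t r) :=
  prod_congr rfl fun r hr => transfer_apply_of_ne (mem_filter.1 hr).2 (ht r)

def merge (i j : α) (s : ι → α) : ι → α := fun r => if s r = j then i else s r

variable [DecidableEq ι]

def mergeFiber (i j : α) (t : ι → α) : Finset (ι → α) :=
  Fintype.piFinset fun r => if t r = i then {i, j} else {t r}

theorem card_image_of_mem_mergeFiber (hij : i ≠ j) {t s : ι → α} (ht : ∀ r, t r ≠ j)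
    (hs : s ∈ mergeFiber i j t) :
    #(univ.image s) = #((univ.image t).erase i)
      + (if s = fun r => if t r = i then j else t r then 0 else 1) + (if s = t then 0 else 1) := by
  simp only [mergeFiber, Fintype.mem_piFinset] at hs
  have hsr : ∀ r, (t r = i ∧ (s r = i ∨ s r = j)) ∨ (t r ≠ i ∧ s r = t r) := by
    intro r; have := hs r; split_ifs at this <;> simp_all
  have hi : i ∈ univ.image s ↔ ¬ s = fun r => if t r = i then j else t r := by
    have : ∀ r, s r = (if t r = i then j else t r) ↔ s r ≠ i := by grind
    simp [funext_iff, this]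
  have hj : j ∈ univ.image s ↔ ¬ s = t := by
    have : ∀ r, s r = t r ↔ s r ≠ j := by grind
    simp [funext_iff, this]
  rw [card_eq_of_subset_of_subset_insert_insert hij (notMem_erase i (univ.image t)) ?_ ?_ ?_]
  · simp only [hi, hj, ite_not]
  · simp only [mem_erase, mem_image, mem_univ, true_and]
    grind
  · intro b
    simp only [mem_erase, mem_image, mem_univ, true_and]
    grind
  · intro b
    simp only [mem_erase, mem_image, mem_univ, true_and, mem_insert]
    grind

theorem sum_prod_mergeFiber (hij : i ≠ j) (t : ι → α) (v : α → ℝ) :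
    ∑ s ∈ mergeFiber i j t, ∏ r, v (s r) =
      (v i + v j) ^ #{r | t r = i} * ∏ r with t r ≠ i, v (t r) := by
  rw [mergeFiber, ← prod_univ_sum, ← prod_ite_eq_pow_mul]
  refine prod_congr rfl fun r _ => ?_
  split_ifs <;> simp [sum_pair hij]

theorem sum_mergeFiber (hij : i ≠ j) {t : ι → α} (ht : ∀ r, t r ≠ j) (hti : ∃ r, t r = i)
    (g : ℕ → ℝ) (v : α → ℝ) :
    ∑ s ∈ mergeFiber i j t, g #(univ.image s) * ∏ r, v (s r) =
      (g (#((univ.image t).erase i) + 2) * (v i + v j) ^ #{r | t r = i}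
        - (g (#((univ.image t).erase i) + 2) - g (#((univ.image t).erase i) + 1))
          * (v i ^ #{r | t r = i} + v j ^ #{r | t r = i})) * ∏ r with t r ≠ i, v (t r) := by
  set b := #((univ.image t).erase i)
  set t' : ι → α := fun r => if t r = i then j else t r
  have htt' : t ≠ t' := by
    obtain ⟨r, hr⟩ := hti
    exact fun h => hij (by simpa [t', hr] using congrFun h r)
  have hmem : t ∈ mergeFiber i j t ∧ t' ∈ mergeFiber i j t := by
    simp only [mergeFiber, Fintype.mem_piFinset, t']
    constructor <;> intro r <;> split_ifs <;> simp_all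
  have hg : ∀ s ∈ mergeFiber i j t, g #(univ.image s) =
      g (b + 2) - (if s = t then g (b + 2) - g (b + 1) else 0)
        - (if s = t' then g (b + 2) - g (b + 1) else 0) := by
    intro s hs
    have hcard : #(univ.image s) = b + (if s = t' then 0 else 1) + (if s = t then 0 else 1) :=
      card_image_of_mem_mergeFiber hij ht hs
    rw [hcard]
    by_cases hst : s = t
    · simp [hst, htt']
    by_cases hst' : s = t'
    · simp [hst', htt'.symm]
    simp [hst, hst']
  have hπt : ∏ r, v (t r) = v i ^ #{r | t r = i} * ∏ r with t r ≠ i, v (t r) := by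
    rw [← prod_ite_eq_pow_mul]
    exact prod_congr rfl fun r _ => by split_ifs with h <;> simp [h]
  have hπt' : ∏ r, v (t' r) = v j ^ #{r | t r = i} * ∏ r with t r ≠ i, v (t r) := by
    rw [← prod_ite_eq_pow_mul]
    exact prod_congr rfl fun r _ => by simp only [t', apply_ite v]
  rw [sum_congr rfl fun s hs => by rw [hg s hs]]
  simp only [sub_mul, ite_mul, zero_mul, sum_sub_distrib, sum_ite_eq', hmem.1, hmem.2, if_true,
    ← mul_sum, sum_prod_mergeFiber hij, hπt, hπt']
  ring

theorem sum_mergeFiber_of_forall_ne {t : ι → α} (hti : ∀ r, t r ≠ i)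
    (g : ℕ → ℝ) (v : α → ℝ) :
    ∑ s ∈ mergeFiber i j t, g #(univ.image s) * ∏ r, v (s r) =
      g #(univ.image t) * ∏ r, v (t r) := by
  have : mergeFiber i j t = {t} := by
    simp only [mergeFiber, hti, if_false]
    exact Fintype.piFinset_singleton t
  rw [this, sum_singleton]

theorem sum_mergeFiber_transfer (hij : i ≠ j) {t : ι → α} (ht : ∀ r, t r ≠ j)
    (hti : ∃ r, t r = i) (g : ℕ → ℝ) (p : α → ℝ) (x : ℝ) :
    ∑ s ∈ mergeFiber i j t, g #(univ.image s) * ∏ r, transfer p i j x (s r) =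
      (g (#((univ.image t).erase i) + 2) * (p i + p j) ^ #{r | t r = i}
        - (g (#((univ.image t).erase i) + 2) - g (#((univ.image t).erase i) + 1))
          * (x ^ #{r | t r = i} + (p i + p j - x) ^ #{r | t r = i}))
        * ∏ r with t r ≠ i, p (t r) := by
  rw [sum_mergeFiber hij ht hti, transfer_apply_left hij, transfer_apply_right hij,
    prod_transfer_of_forall_ne ht, add_sub_cancel]

theorem sum_mergeFiber_le_transfer {g : ℕ → ℝ} (hg : Monotone g) {p : α → ℝ} (hp : 0 ≤ p)
    (hij : i ≠ j) {x : ℝ} (hx : x ∈ Set.uIcc (p i) (p j)) {t : ι → α} (ht : ∀ r, t r ≠ j) :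
    ∑ s ∈ mergeFiber i j t, g #(univ.image s) * ∏ r, p (s r) ≤
      ∑ s ∈ mergeFiber i j t, g #(univ.image s) * ∏ r, transfer p i j x (s r) := by
  by_cases hti : ∃ r, t r = i
  · have h₀ := sum_mergeFiber_transfer hij ht hti g p (p i)
    rw [transfer_self, add_sub_cancel_left] at h₀
    rw [h₀, sum_mergeFiber_transfer hij ht hti]
    refine mul_le_mul_of_nonneg_right (sub_le_sub_left (mul_le_mul_of_nonneg_left ?_ ?_) _)
      (prod_nonneg fun r _ => hp _)
    · exact pow_add_pow_le_of_mem_uIcc _ (hp i) (hp j) hx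
    · exact sub_nonneg.2 (hg (Nat.le_succ _))
  · push Not at hti
    rw [sum_mergeFiber_of_forall_ne hti, sum_mergeFiber_of_forall_ne hti]
    simp_rw [transfer_apply_of_ne (hti _) (ht _)]
    rfl

theorem sum_mergeFiber_lt_transfer_half {g : ℕ → ℝ} {p : α → ℝ} (hp : 0 ≤ p)
    (hij : i ≠ j) (hpij : p i ≠ p j) {t : ι → α} (ht : ∀ r, t r ≠ j)
    (hA : 2 ≤ #{r | t r = i}) (hw : 0 < ∏ r with t r ≠ i, p (t r))
    (hgB : g (#((univ.image t).erase i) + 1) < g (#((univ.image t).erase i) + 2)) :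
    ∑ s ∈ mergeFiber i j t, g #(univ.image s) * ∏ r, p (s r) <
      ∑ s ∈ mergeFiber i j t, g #(univ.image s) * ∏ r, transfer p i j ((p i + p j) / 2) (s r) := by
  have hti : ∃ r, t r = i := by
    obtain ⟨r, hr⟩ := card_pos.1 (by omega : 0 < #{r | t r = i})
    exact ⟨r, (mem_filter.1 hr).2⟩
  have h₀ := sum_mergeFiber_transfer hij ht hti g p (p i)
  rw [transfer_self, add_sub_cancel_left] at h₀
  rw [h₀, sum_mergeFiber_transfer hij ht hti,
    show p i + p j - (p i + p j) / 2 = (p i + p j) / 2 by ring]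
  refine mul_lt_mul_of_pos_right (sub_lt_sub_left (mul_lt_mul_of_pos_left ?_ (sub_pos.2 hgB)) _) hw
  linarith [two_mul_half_pow_lt hA (hp i) (hp j) hpij]

variable [Fintype α]

variable (ι) in
def expectDistinct (g : ℕ → ℝ) (p : α → ℝ) : ℝ :=
  ∑ s : ι → α, g #(univ.image s) * ∏ r, p (s r)

theorem filter_merge_eq_mergeFiber {t : ι → α} (ht : ∀ r, t r ≠ j) :
    ({s | merge i j s = t} : Finset (ι → α)) = mergeFiber i j t := by
  ext s
  simp only [mem_filter, mem_univ, true_and, mergeFiber, Fintype.mem_piFinset, funext_iff, merge]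
  refine forall_congr' fun r => ?_
  have := ht r
  split_ifs <;> grind

theorem sum_eq_sum_mergeFiber (hij : i ≠ j) (F : (ι → α) → ℝ) :
    ∑ s, F s = ∑ t with ∀ r, t r ≠ j, ∑ s ∈ mergeFiber i j t, F s := by
  rw [← sum_fiberwise_of_maps_to (g := merge i j) (t := {t | ∀ r, t r ≠ j})]
  · refine sum_congr rfl fun t ht => ?_
    rw [filter_merge_eq_mergeFiber (mem_filter.1 ht).2]
  · intro s _
    simp only [mem_filter, mem_univ, true_and, merge]
    intro r
    split_ifs with h
    · exact hij
    · exact h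

theorem expectDistinct_le_transfer {g : ℕ → ℝ} (hg : Monotone g) {p : α → ℝ} (hp : 0 ≤ p)
    (hij : i ≠ j) {x : ℝ} (hx : x ∈ Set.uIcc (p i) (p j)) :
    expectDistinct ι g p ≤ expectDistinct ι g (transfer p i j x) := by
  rw [expectDistinct, expectDistinct, sum_eq_sum_mergeFiber hij, sum_eq_sum_mergeFiber hij]
  exact sum_le_sum fun t ht => sum_mergeFiber_le_transfer hg hp hij hx (mem_filter.1 ht).2

theorem expectDistinct_lt_transfer_half {g : ℕ → ℝ} (hg : Monotone g) {p : α → ℝ} (hp : 0 ≤ p)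
    (hij : i ≠ j) (hpij : p i ≠ p j) {t : ι → α} (ht : ∀ r, t r ≠ j)
    (hA : 2 ≤ #{r | t r = i}) (hw : 0 < ∏ r with t r ≠ i, p (t r))
    (hgB : g (#((univ.image t).erase i) + 1) < g (#((univ.image t).erase i) + 2)) :
    expectDistinct ι g p < expectDistinct ι g (transfer p i j ((p i + p j) / 2)) := by
  rw [expectDistinct, expectDistinct, sum_eq_sum_mergeFiber hij, sum_eq_sum_mergeFiber hij]
  refine sum_lt_sum (fun t ht => sum_mergeFiber_le_transfer hg hp hij (add_div_two_mem_uIcc _ _)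
    (mem_filter.1 ht).2) ⟨t, mem_filter.2 ⟨mem_univ _, ht⟩,
      sum_mergeFiber_lt_transfer_half hp hij hpij ht hA hw hgB⟩

end Merge

section Q

variable {n m k : ℕ}

theorem exists_image_eq_insert_of_two_le {α : Type*} [DecidableEq α] {B : Finset α} {i : α}
    (hi : i ∉ B) (hm : #B + 2 ≤ m) :
    ∃ t : Fin m → α, univ.image t = insert i B ∧ 2 ≤ #{r | t r = i} := by
  obtain ⟨m, rfl⟩ : ∃ m', m = m' + 1 := ⟨m - 1, by omega⟩
  obtain ⟨s, hs⟩ := exists_univ_image_eq (ι := Fin m) (insert_nonempty i B)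
    (by rw [card_insert_of_notMem hi, Fintype.card_fin]; omega)
  refine ⟨Fin.cons i s, ?_, ?_⟩
  · have hcons : univ.image (Fin.cons i s : Fin (m + 1) → α) = insert i (univ.image s) := by
      ext a
      simp [Fin.exists_fin_succ, eq_comm]
    rw [hcons, hs, insert_eq_of_mem (mem_insert_self i B)]
  · obtain ⟨r, -, hr⟩ := mem_image.1 (hs ▸ mem_insert_self i B)
    refine one_lt_card.2 ⟨0, by simp, r.succ, by simpa using hr, (Fin.succ_ne_zero r).symm⟩

theorem monotone_ite_le_one_zero (k : ℕ) : Monotone fun d : ℕ => if k ≤ d then (1 : ℝ) else 0 := by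
  intro a b hab
  by_cases hb : k ≤ b
  · dsimp only
    split_ifs <;> norm_num
  · simp only [if_neg hb, if_neg fun ha : k ≤ a => hb (ha.trans hab), le_refl]

theorem q_eq_expectDistinct (p : Fin n → ℝ) :
    q n m k p = expectDistinct (Fin m) (fun d => if k ≤ d then 1 else 0) p := by
  rw [q, expectDistinct, sum_filter]
  exact sum_congr rfl fun s _ => by split_ifs <;> simp

theorem q_le_uniform {p : Fin n → ℝ} (hp : 0 ≤ p) (hsum : ∑ l, p l = 1) :
    q n m k p ≤ q n m k fun _ => 1 / (n : ℝ) := by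
  have h := le_apply_uniform_of_le_transfer (F := q n m k) (fun p hp i j x hij hx => by
    simpa only [q_eq_expectDistinct] using
      expectDistinct_le_transfer (monotone_ite_le_one_zero k) hp hij hx) hp hsum
  simpa using h

theorem le_card_support_of_q_ne_zero {p : Fin n → ℝ} (h : q n m k p ≠ 0) :
    k ≤ #{l | p l ≠ 0} := by
  obtain ⟨s, hs, hprod⟩ := exists_ne_zero_of_sum_ne_zero h
  refine (mem_filter.1 hs).2.trans (card_le_card fun l hl => ?_)
  obtain ⟨r, -, rfl⟩ := mem_image.1 hl
  exact mem_filter.2 ⟨mem_univ _, prod_ne_zero_iff.1 hprod r (mem_univ r)⟩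

theorem q_pos_of_le_card_support {p : Fin n → ℝ} (hp : 0 ≤ p) (hk : 0 < k) (hkm : k ≤ m)
    (hsupp : k ≤ #{l | p l ≠ 0}) : 0 < q n m k p := by
  obtain ⟨S, hS, hScard⟩ := exists_subset_card_eq hsupp
  obtain ⟨s, hs⟩ := exists_univ_image_eq (ι := Fin m) (card_pos.1 (hScard ▸ hk))
    (by rwa [hScard, Fintype.card_fin])
  refine sum_pos' (fun s _ => prod_nonneg fun r _ => hp _) ⟨s, ?_, prod_pos fun r _ => ?_⟩
  · exact mem_filter.2 ⟨mem_univ _, by rw [hs, hScard]⟩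
  · have := (mem_filter.1 (hS (hs ▸ mem_image_of_mem s (mem_univ r)))).2
    exact (hp _).lt_of_ne' this

theorem q_lt_transfer_half {p : Fin n → ℝ} (hp : 0 ≤ p) {i j : Fin n} (hij : i ≠ j)
    (hpij : p i ≠ p j) {B : Finset (Fin n)} (hi : i ∉ B) (hj : j ∉ B) (hB : ∀ l ∈ B, 0 < p l)
    (hBk : #B + 2 = k) (hkm : k ≤ m) :
    q n m k p < q n m k (transfer p i j ((p i + p j) / 2)) := by
  obtain ⟨t, ht, hA⟩ := exists_image_eq_insert_of_two_le hi (hBk ▸ hkm)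
  have hrange : ∀ r, t r ∈ insert i B := fun r => ht ▸ mem_image_of_mem t (mem_univ r)
  rw [q_eq_expectDistinct, q_eq_expectDistinct]
  refine expectDistinct_lt_transfer_half (monotone_ite_le_one_zero k) hp hij hpij (t := t)
    (fun r h => ?_) hA (prod_pos fun r hr => hB _ ?_) ?_
  · have := hrange r
    rw [h, mem_insert] at this
    exact this.elim (fun h' => hij h'.symm) hj
  · exact (mem_insert.1 (hrange r)).resolve_left (mem_filter.1 hr).2
  · rw [ht, erase_insert hi]
    simp [← hBk]

end Q

theorem uniform_maximises_distinct_values_general (n m k : ℕ)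
    (p : Fin n → ℝ) (hp : ∀ i, 0 ≤ p i) (hsum : ∑ i, p i = 1) :
    q n m k p ≤ q n m k (fun _ => 1 / (n : ℝ)) ∧
    (k ≤ n → k ≤ m → 2 ≤ k → q n m k p = q n m k (fun _ => 1 / (n : ℝ)) →
      p = fun _ => 1 / (n : ℝ)) := by
  refine ⟨q_le_uniform hp hsum, fun hkn hkm hk2 heq => ?_⟩
  by_contra hne
  obtain ⟨i, j, hpij⟩ : ∃ i j, p i ≠ p j := by
    by_contra! h
    exact hne (by simpa using eq_uniform_of_forall_eq hsum h)
  have hij : i ≠ j := fun h => hpij (congrArg p h)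
  have hsupp : k ≤ #{l | p l ≠ 0} := by
    refine le_card_support_of_q_ne_zero (m := m) ?_
    rw [heq]
    refine (q_pos_of_le_card_support ?_ (by omega) hkm ?_).ne'
    · intro l
      positivity
    · simpa [show n ≠ 0 by omega] using hkn
  obtain ⟨B, hB, hBcard⟩ :=
    exists_subset_card_eq (s := (({l | p l ≠ 0} : Finset _).erase i).erase j) (n := k - 2)
      (by grind [pred_card_le_card_erase])
  have hBsub : ∀ l ∈ B, l ≠ j ∧ l ≠ i ∧ p l ≠ 0 := fun l hl => by simpa using hB hl
  have hlt := q_lt_transfer_half (m := m) hp hij hpij (B := B) (fun h => (hBsub i h).2.1 rfl)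
    (fun h => (hBsub j h).1 rfl) (fun l hl => (hp l).lt_of_ne' (hBsub l hl).2.2) (by omega) hkm
  have hle := q_le_uniform (m := m) (k := k)
    (transfer_nonneg hp hij (add_div_two_mem_uIcc _ _)) (sum_transfer.trans hsum)
  linarith

/-- The uniform vector maximises the probability of seeing at least `k` distinct values among
`m` i.i.d. samples, and when `n, m ≥ k ≥ 2` it is the unique maximiser. -/
theorem uniform_maximises_distinct_values (n m k : ℕ) (hn : 1 ≤ n)
    (p : Fin n → ℝ) (hp : ∀ i, 0 ≤ p i) (hsum : ∑ i, p i = 1) :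
    q n m k p ≤ q n m k (fun _ => 1 / (n : ℝ)) ∧
    (k ≤ n → k ≤ m → 2 ≤ k → q n m k p = q n m k (fun _ => 1 / (n : ℝ)) →
      p = fun _ => 1 / (n : ℝ)) :=
  uniform_maximises_distinct_values_general n m k p hp hsum
end
end

section
/- Let N ≥ 2 and m ≥ 3 be integers. For 0 ≤ k ≤ m−1 define E_k = Σ_s (N−1)^{−k} / (|image(s)| + 1), the sum over all functions s : {1,…,k} → {1,…,N−1} (so E₀ = 1/1 = 1); E_k is the expectation of 1/(D+1) where D is the number of distinct values among k i.i.d. uniform samples from {1,…,N−1}. Then for every y with 0 < y < 1/N, one has Σ_{k=0}^{m−1} C(m,k) (1−y)^k y^{m−k} E_k > y, where C(m,k) is the binomial coefficient. -/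
/-!
Write `N = n + 1`. The number of maps `s : Fin k → Fin n` with a given image `A` depends only on
`#A`, and the `(d + 1)`-subsets of `{0, …, n}` are counted both by `∑_{#A = d} (n + 1) / (d + 1)`
and by `∑_{#A = d} #{j ≤ n | A < j}`; summed over `s`, the latter gives `∑_{j ≤ n} j ^ k`. Hence
`E_k = ∑_{j ≤ n} (j / n) ^ k / (n + 1)`, and the binomial theorem turns the sum of the theorem
into `drift n m y / (n ^ m (n + 1))`, where
`drift n m y = ∑_{j ≤ n} ((j (1 - y) + n y) ^ m - (j (1 - y)) ^ m)`.

This polynomial vanishes at `0`, equals `n ^ m` at `1 / (n + 1)`, and is strictly concave in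
between, so it lies above its chord. For concavity, reflecting `j ↦ n - j` compares
`∑ j² (n - c j) ^ r` with `∑ j² (c j) ^ r`, where `c = 1 - y` and `r = m - 2`; since
`c (n + 1) > n` we have `n - c j < c (n + 1 - j)`, and `∑ j² (n + 1 - j) ^ r ≤ ∑ j ^ (r + 2)` is a
rearrangement inequality: pairing `i` with its reflection gives the sum of the nonnegative terms
`(a ^ r - b ^ r) (a ² - b ²)`.
-/

open Finset

theorem Nat.sum_range_choose_eq_succ_choose_succ (n d : ℕ) :
    ∑ j ∈ range (n + 1), j.choose d = (n + 1).choose (d + 1) := by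
  induction n with
  | zero => cases d <;> simp [Nat.choose_eq_zero_of_lt]
  | succ n ih => rw [sum_range_succ, ih, add_comm, Nat.choose_succ_succ' (n + 1)]

section StrictUpperBounds
variable {ι : Type*} [Fintype ι] [DecidableEq ι] (n : ℕ)

theorem card_filter_forall_val_lt {j : ℕ} (hj : j ≤ n) :
    #{s : ι → Fin n | ∀ i, (s i : ℕ) < j} = j ^ Fintype.card ι := by
  have : ({s : ι → Fin n | ∀ i, (s i : ℕ) < j} : Finset _) =
      Fintype.piFinset fun _ => {a : Fin n | (a : ℕ) < j} := by
    ext s; simp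
  rw [this, Fintype.card_piFinset, prod_const, Fin.card_filter_val_lt, min_eq_right hj, card_univ]

theorem sum_range_pow_eq_sum_card_strictUpperBounds :
    ∑ j ∈ range (n + 1), j ^ Fintype.card ι =
      ∑ s : ι → Fin n, #{j ∈ range (n + 1) | ∀ a ∈ univ.image s, (a : ℕ) < j} := by
  have := sum_card_bipartiteAbove_eq_sum_card_bipartiteBelow (s := (univ : Finset (ι → Fin n)))
    (t := range (n + 1)) (r := fun s j => ∀ i, (s i : ℕ) < j)
  simp only [bipartiteAbove, bipartiteBelow] at this
  simp only [forall_mem_image, mem_univ, true_implies, this]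
  exact sum_congr rfl fun j hj =>
    (card_filter_forall_val_lt n (Nat.lt_succ_iff.1 (mem_range.1 hj))).symm

theorem sum_powersetCard_card_strictUpperBounds (d : ℕ) :
    ∑ A ∈ powersetCard d (univ : Finset (Fin n)), #{j ∈ range (n + 1) | ∀ a ∈ A, (a : ℕ) < j} =
      (n + 1).choose (d + 1) := by
  have := sum_card_bipartiteAbove_eq_sum_card_bipartiteBelow
    (s := powersetCard d (univ : Finset (Fin n))) (t := range (n + 1))
    (r := fun (A : Finset (Fin n)) (j : ℕ) => ∀ a ∈ A, (a : ℕ) < j)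
  simp only [bipartiteAbove, bipartiteBelow] at this
  rw [this, ← Nat.sum_range_choose_eq_succ_choose_succ]
  refine sum_congr rfl fun j hj => ?_
  have : (powersetCard d univ).filter (fun A : Finset (Fin n) => ∀ a ∈ A, (a : ℕ) < j) =
      powersetCard d {a : Fin n | (a : ℕ) < j} := by
    ext A; simp [mem_powersetCard, subset_iff, and_comm]
  rw [this, card_powersetCard, Fin.card_filter_val_lt,
    min_eq_right (Nat.lt_succ_iff.1 (mem_range.1 hj))]
end StrictUpperBounds

section Fibres
variable {ι β : Type*} [Fintype ι] [DecidableEq ι] [Fintype β] [DecidableEq β]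

theorem card_filter_image_eq_of_card_eq {A B : Finset β} (h : #A = #B) :
    #{s : ι → β | univ.image s = A} = #{s : ι → β | univ.image s = B} := by
  obtain ⟨σ, hσ⟩ : ∃ σ : Equiv.Perm β, A.image σ = B := by
    let e : A ≃ B := Fintype.equivOfCardEq (by simpa using h)
    refine ⟨e.extendSubtype, eq_of_subset_of_card_le ?_ ?_⟩
    · exact image_subset_iff.mpr fun a ha => e.extendSubtype_mem a ha
    · rw [card_image_of_injective _ (Equiv.injective _), h]
  have hσ' : B.image σ.symm = A := by rw [← hσ, image_image]; simp
  refine card_bij' (fun s _ => σ ∘ s) (fun s _ => σ.symm ∘ s) ?_ ?_ ?_ ?_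
  · intro s hs
    simp only [mem_filter_univ] at hs ⊢
    rw [← image_image, hs, hσ]
  · intro s hs
    simp only [mem_filter_univ] at hs ⊢
    rw [← image_image, hs, hσ']
  all_goals intro s _; funext i; simp

theorem sum_image_eq_of_sum_powersetCard_eq {M : Type*} [AddCommMonoid M] {g h : Finset β → M}
    (hgh : ∀ d, ∑ A ∈ powersetCard d univ, g A = ∑ A ∈ powersetCard d univ, h A) :
    ∑ s : ι → β, g (univ.image s) = ∑ s : ι → β, h (univ.image s) := by
  have fiberwise (f : Finset β → M) : ∑ s : ι → β, f (univ.image s) =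
      ∑ d ∈ range (Fintype.card β + 1), ∑ A ∈ powersetCard d univ,
        #{s : ι → β | univ.image s = A} • f A := by
    rw [← Finset.sum_fiberwise' univ (fun s : ι → β => univ.image s), ← powerset_univ,
      sum_powerset, card_univ]
    simp only [sum_const]
  rw [fiberwise, fiberwise]
  refine sum_congr rfl fun d _ => ?_
  rcases (powersetCard d (univ : Finset β)).eq_empty_or_nonempty with hd | ⟨A₀, hA₀⟩
  · simp [hd]
  have hfib : ∀ A ∈ powersetCard d (univ : Finset β),
      #{s : ι → β | univ.image s = A} = #{s : ι → β | univ.image s = A₀} := fun A hA =>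
    card_filter_image_eq_of_card_eq (by rw [(mem_powersetCard.1 hA).2, (mem_powersetCard.1 hA₀).2])
  have hconst (f : Finset β → M) : ∑ A ∈ powersetCard d univ, #{s : ι → β | univ.image s = A} • f A
      = #{s : ι → β | univ.image s = A₀} • ∑ A ∈ powersetCard d univ, f A := by
    rw [smul_sum]
    exact sum_congr rfl fun A hA => by rw [hfib A hA]
  rw [hconst, hconst, hgh]
end Fibres

theorem sum_one_div_card_image_add_one {ι : Type*} [Fintype ι] [DecidableEq ι] (n : ℕ) :
    ∑ s : ι → Fin n, 1 / ((univ.image s).card + 1 : ℝ) =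
      (∑ j ∈ range (n + 1), (j : ℝ) ^ Fintype.card ι) / (n + 1) := by
  have hpow : ∑ j ∈ range (n + 1), (j : ℝ) ^ Fintype.card ι =
      ∑ s : ι → Fin n, (#{j ∈ range (n + 1) | ∀ a ∈ univ.image s, (a : ℕ) < j} : ℝ) := by
    exact_mod_cast sum_range_pow_eq_sum_card_strictUpperBounds n
  have hfib : ∑ s : ι → Fin n, (#{j ∈ range (n + 1) | ∀ a ∈ univ.image s, (a : ℕ) < j} : ℝ) =
      ∑ s : ι → Fin n, ((n : ℝ) + 1) / ((univ.image s).card + 1) := by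
    refine sum_image_eq_of_sum_powersetCard_eq
      (g := fun A : Finset (Fin n) => (#{j ∈ range (n + 1) | ∀ a ∈ A, (a : ℕ) < j} : ℝ))
      (h := fun A : Finset (Fin n) => ((n : ℝ) + 1) / (#A + 1)) fun d => ?_
    have hchoose : ((n + 1).choose (d + 1) : ℝ) = n.choose d * (n + 1) / (d + 1) := by
      rw [eq_div_iff (by positivity)]
      exact_mod_cast (Nat.add_one_mul_choose_eq n d).symm.trans (mul_comm _ _)
    rw [← Nat.cast_sum, sum_powersetCard_card_strictUpperBounds, hchoose,
      sum_congr rfl fun A hA => by rw [(mem_powersetCard.1 hA).2], sum_const, card_powersetCard,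
      card_univ, Fintype.card_fin, nsmul_eq_mul, mul_div_assoc]
  rw [hpow, hfib, eq_div_iff (by positivity), sum_mul]
  exact sum_congr rfl fun s _ => by ring

theorem iteratedDeriv_const_add_mul_pow {𝕜 : Type*} [NontriviallyNormedField 𝕜]
    (a b : 𝕜) (m k : ℕ) (y : 𝕜) :
    iteratedDeriv k (fun y => (a + b * y) ^ m) y =
      m.descFactorial k * b ^ k * (a + b * y) ^ (m - k) := by
  rw [iteratedDeriv_comp_const_mul (f := fun z => (a + z) ^ m) (by fun_prop),
    iteratedDeriv_comp_const_add (f := (· ^ m))]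
  simp only [iteratedDeriv_pow]
  ring

theorem sum_range_choose_mul_pow_mul_pow {R : Type*} [CommRing R] (a b : R) (m : ℕ) :
    ∑ k ∈ range m, (m.choose k : R) * a ^ k * b ^ (m - k) = (a + b) ^ m - a ^ m := by
  rw [add_pow, sum_range_succ, Nat.choose_self, Nat.sub_self, pow_zero, Nat.cast_one, mul_one,
    mul_one, add_sub_cancel_right]
  exact sum_congr rfl fun k _ => by ring

theorem sum_sq_mul_pow_reflect_le (f : ℕ → ℝ) (hf : ∀ i, 0 ≤ f i) (L r : ℕ) :
    ∑ i ∈ range L, f i ^ 2 * f (L - 1 - i) ^ r ≤ ∑ i ∈ range L, f i ^ (r + 2) := by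
  have hswap : ∑ i ∈ range L, f i ^ 2 * f (L - 1 - i) ^ r =
      ∑ i ∈ range L, f (L - 1 - i) ^ 2 * f i ^ r := by
    rw [← sum_range_reflect]
    exact sum_congr rfl fun i hi => by
      rw [Nat.sub_sub_self (Nat.le_sub_one_of_lt (mem_range.1 hi))]
  have hpair : 0 ≤ ∑ i ∈ range L, (f i ^ r - f (L - 1 - i) ^ r) * (f i ^ 2 - f (L - 1 - i) ^ 2) :=
    sum_nonneg fun i _ => by
      rcases le_total (f i) (f (L - 1 - i)) with h | h
      · exact mul_nonneg_of_nonpos_of_nonpos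
          (sub_nonpos.2 (pow_le_pow_left₀ (hf _) h r)) (sub_nonpos.2 (pow_le_pow_left₀ (hf _) h 2))
      · exact mul_nonneg (sub_nonneg.2 (pow_le_pow_left₀ (hf _) h r))
          (sub_nonneg.2 (pow_le_pow_left₀ (hf _) h 2))
  have hexpand : ∑ i ∈ range L, (f i ^ r - f (L - 1 - i) ^ r) * (f i ^ 2 - f (L - 1 - i) ^ 2) =
      ∑ i ∈ range L, f i ^ (r + 2) + ∑ i ∈ range L, f (L - 1 - i) ^ (r + 2) -
        ∑ i ∈ range L, f i ^ 2 * f (L - 1 - i) ^ r -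
          ∑ i ∈ range L, f (L - 1 - i) ^ 2 * f i ^ r := by
    simp only [← sum_add_distrib, ← sum_sub_distrib]
    exact sum_congr rfl fun i _ => by ring
  rw [hexpand, sum_range_reflect (fun i => f i ^ (r + 2)), ← hswap] at hpair
  linarith

theorem sum_sq_mul_succ_sub_pow_le (n r : ℕ) :
    ∑ j ∈ range (n + 1), (j : ℝ) ^ 2 * (n + 1 - j) ^ r ≤
      ∑ j ∈ range (n + 1), (j : ℝ) ^ (r + 2) := by
  simp only [sum_range_succ' _ n, Nat.cast_zero, zero_pow two_ne_zero, zero_mul,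
    zero_pow (Nat.succ_ne_zero _), add_zero]
  convert sum_sq_mul_pow_reflect_le (fun i => (i : ℝ) + 1) (fun i => by positivity) n r
    using 2 with i hi i
  · have hi := mem_range.1 hi
    rw [Nat.cast_sub (by omega), Nat.cast_sub (by omega)]
    push_cast
    ring
  · push_cast; rfl

theorem sum_sq_mul_sub_mul_pow_lt (n r : ℕ) (hn : 1 ≤ n) (hr : 1 ≤ r) (c : ℝ) (hc : n < c * (n + 1))
    (hc1 : c ≤ 1) :
    ∑ j ∈ range (n + 1), (j : ℝ) ^ 2 * (n - c * j) ^ r <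
      ∑ j ∈ range (n + 1), (j : ℝ) ^ 2 * (j * c) ^ r := by
  have hn' : (1 : ℝ) ≤ n := by exact_mod_cast hn
  have hc0 : 0 < c := by nlinarith
  have hbase : ∀ j ∈ range (n + 1), 0 ≤ (n : ℝ) - c * j ∧ (n : ℝ) - c * j ≤ c * (n + 1 - j) := by
    intro j hj
    have : (j : ℝ) ≤ n := by exact_mod_cast Nat.lt_succ_iff.1 (mem_range.1 hj)
    constructor <;> nlinarith
  calc ∑ j ∈ range (n + 1), (j : ℝ) ^ 2 * (n - c * j) ^ r
      < ∑ j ∈ range (n + 1), (j : ℝ) ^ 2 * (c * (n + 1 - j)) ^ r := by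
        refine sum_lt_sum (fun j hj => ?_) ⟨n, self_mem_range_succ n, ?_⟩
        · exact mul_le_mul_of_nonneg_left
            (pow_le_pow_left₀ (hbase j hj).1 (hbase j hj).2 r) (sq_nonneg _)
        · refine mul_lt_mul_of_pos_left (pow_lt_pow_left₀ ?_ (hbase n (self_mem_range_succ n)).1
            (by omega)) (by positivity)
          linarith
    _ = c ^ r * ∑ j ∈ range (n + 1), (j : ℝ) ^ 2 * (n + 1 - j) ^ r := by
        rw [mul_sum]; exact sum_congr rfl fun j _ => by rw [mul_pow]; ring
    _ ≤ c ^ r * ∑ j ∈ range (n + 1), (j : ℝ) ^ (r + 2) :=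
        mul_le_mul_of_nonneg_left (sum_sq_mul_succ_sub_pow_le n r) (by positivity)
    _ = ∑ j ∈ range (n + 1), (j : ℝ) ^ 2 * (j * c) ^ r := by
        rw [mul_sum]; exact sum_congr rfl fun j _ => by ring

noncomputable def drift (n m : ℕ) (y : ℝ) : ℝ :=
  ∑ j ∈ range (n + 1), (((j : ℝ) * (1 - y) + n * y) ^ m - ((j : ℝ) * (1 - y)) ^ m)

namespace drift
variable (n m : ℕ)

theorem apply_zero : drift n m 0 = 0 := by simp [drift]

theorem apply_one_div_succ (hm : m ≠ 0) : drift n m (1 / (n + 1)) = n ^ m := by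
  have hterm : ∀ j : ℕ, ((j : ℝ) * (1 - 1 / (n + 1)) + n * (1 / (n + 1))) ^ m -
      ((j : ℝ) * (1 - 1 / (n + 1))) ^ m =
      (n * ((j + 1 : ℕ) : ℝ) / (n + 1)) ^ m - (n * (j : ℝ) / (n + 1)) ^ m := fun j => by
    congr 2 <;> field_simp <;> push_cast <;> ring
  rw [drift, sum_congr rfl fun j _ => hterm j,
    sum_range_sub (fun j : ℕ => (n * (j : ℝ) / (n + 1)) ^ m)]
  push_cast
  rw [mul_div_cancel_right₀ _ (by positivity)]
  simp [zero_pow hm]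

theorem iteratedDeriv_two (y : ℝ) :
    iteratedDeriv 2 (drift n m) y = m.descFactorial 2 * ∑ j ∈ range (n + 1),
      (((n : ℝ) - j) ^ 2 * ((j : ℝ) * (1 - y) + n * y) ^ (m - 2) -
        (j : ℝ) ^ 2 * ((j : ℝ) * (1 - y)) ^ (m - 2)) := by
  have hdrift : drift n m = fun y => ∑ j ∈ range (n + 1),
      (((j : ℝ) + (n - j) * y) ^ m - ((j : ℝ) + (-j) * y) ^ m) := by
    funext y; exact sum_congr rfl fun j _ => by ring_nf
  rw [hdrift, iteratedDeriv_fun_sum (fun j _ => by fun_prop), mul_sum]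
  refine sum_congr rfl fun j _ => ?_
  rw [iteratedDeriv_fun_sub (by fun_prop) (by fun_prop), iteratedDeriv_const_add_mul_pow,
    iteratedDeriv_const_add_mul_pow]
  ring_nf

theorem iteratedDeriv_two_neg (hn : 1 ≤ n) (hm : 3 ≤ m) {y : ℝ}
    (hy : y ∈ Set.Ioo (0 : ℝ) (1 / (n + 1))) :
    iteratedDeriv 2 (drift n m) y < 0 := by
  have hreflect : ∑ j ∈ range (n + 1), ((n : ℝ) - j) ^ 2 * ((j : ℝ) * (1 - y) + n * y) ^ (m - 2) =
      ∑ j ∈ range (n + 1), (j : ℝ) ^ 2 * (n - (1 - y) * j) ^ (m - 2) := by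
    rw [← sum_range_reflect]
    refine sum_congr rfl fun j hj => ?_
    rw [add_tsub_cancel_right, Nat.cast_sub (Nat.lt_succ_iff.1 (mem_range.1 hj))]
    ring_nf
  have hy1 : y * (n + 1) < 1 := by
    have := hy.2; rwa [lt_div_iff₀ (by positivity)] at this
  have key := sum_sq_mul_sub_mul_pow_lt n (m - 2) hn (by omega) (1 - y) (by linarith)
    (by linarith [hy.1])
  rw [iteratedDeriv_two, sum_sub_distrib, hreflect]
  exact mul_neg_of_pos_of_neg (by exact_mod_cast Nat.descFactorial_pos.2 (by omega))
    (sub_neg.2 key)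

theorem strictConcaveOn (hn : 1 ≤ n) (hm : 3 ≤ m) :
    StrictConcaveOn ℝ (Set.Icc (0 : ℝ) (1 / (n + 1))) (drift n m) :=
  strictConcaveOn_of_deriv2_neg (convex_Icc _ _) (by unfold drift; fun_prop) fun y hy => by
    rw [interior_Icc] at hy
    rw [← iteratedDeriv_eq_iterate]
    exact iteratedDeriv_two_neg n m hn hm hy

theorem chord_lt (hn : 1 ≤ n) (hm : 3 ≤ m) {y : ℝ} (hy0 : 0 < y) (hy1 : y < 1 / (n + 1)) :
    (n + 1) * n ^ m * y < drift n m y := by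
  have hsecant := (strictConcaveOn n m hn hm).secant_strict_mono (a := 0)
    (Set.left_mem_Icc.2 (by positivity)) ⟨hy0.le, hy1.le⟩ (Set.right_mem_Icc.2 (by positivity))
    hy0.ne' (by positivity) hy1
  rw [apply_zero, apply_one_div_succ n m (by omega)] at hsecant
  simp only [sub_zero, div_div_eq_mul_div, div_one] at hsecant
  rw [lt_div_iff₀ hy0] at hsecant
  linarith

theorem sum_choose_mul_eq (hn : n ≠ 0) (y : ℝ) :
    ∑ k ∈ range m, (m.choose k : ℝ) * (1 - y) ^ k * y ^ (m - k) *
      (1 / (n : ℝ) ^ k * ((∑ j ∈ range (n + 1), (j : ℝ) ^ k) / (n + 1))) =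
      drift n m y / (n ^ m * (n + 1)) := by
  simp only [drift, sum_div, ← sum_range_choose_mul_pow_mul_pow, mul_sum]
  rw [sum_comm]
  refine sum_congr rfl fun j _ => sum_congr rfl fun k hk => ?_
  have hpow : (n : ℝ) ^ m = n ^ k * n ^ (m - k) := by
    rw [← pow_add, Nat.add_sub_cancel' (mem_range.1 hk).le]
  rw [hpow, mul_pow, mul_pow]
  field_simp
end drift

/-- For integers `N ≥ 2`, `m ≥ 3` and `0 < y < 1/N`, one has
`Σ_{k=0}^{m-1} C(m,k) (1-y)^k y^{m-k} E_k > y`, where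
`E_k = (N-1)^{-k} Σ_{s : [k] → [N-1]} 1/(|image s| + 1)` is the expectation of `1/(D+1)`
with `D` the number of distinct values among `k` i.i.d. uniform samples from `{1,…,N-1}`. -/
theorem visible_type_drift_positive (N m : ℕ) (hN : 2 ≤ N) (hm : 3 ≤ m)
    (y : ℝ) (hy0 : 0 < y) (hyN : y < 1 / N) :
    y < ∑ k ∈ Finset.range m, (m.choose k : ℝ) * (1 - y) ^ k * y ^ (m - k) *
      ((1 / ((N : ℝ) - 1) ^ k) *
        ∑ s : Fin k → Fin (N - 1), 1 / ((Finset.univ.image s).card + 1 : ℝ)) := by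
  obtain ⟨n, rfl⟩ : ∃ n, N = n + 1 := ⟨N - 1, by omega⟩
  simp_rw [sum_one_div_card_image_add_one, Fintype.card_fin]
  simp only [Nat.add_sub_cancel, Nat.cast_add, Nat.cast_one, add_sub_cancel_right] at hyN ⊢
  have hn : (0 : ℝ) < n := by exact_mod_cast (by omega : 0 < n)
  rw [drift.sum_choose_mul_eq n m (by omega), lt_div_iff₀ (by positivity)]
  have := drift.chord_lt n m (by omega) hm hy0 hyN
  linarith
end
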